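/- Let x be a complex number with |x| > 64. Then ∑_{k=0}^∞ (C(2k,k)·C(4k,2k)/x^k)·(2H_{4k} − H_{2k}) = (1/2)·log(x/(x−64)) · ∑_{k=0}^∞ C(2k,k)·C(4k,2k)/x^k, both series being convergent. -/

import Mathlib

/-!
Write `A_k = C(2k,k) C(4k,2k)` and `h_k = 2 H_{4k} - H_{2k}`. Since
`-log (1 - 64/x) = ∑ (64/x)^m / m`, the Cauchy product of this series with `∑ A_k / x^k` has
`n`-th coefficient `x^{-n} ∑_{k<n} A_k 64^{n-k} / (n-k)`, so it suffices to show that this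
convolution equals `2 A_n h_n`. Both sides satisfy the same first-order recurrence, driven by
`(n+1)^2 A_{n+1} = 4 (4n+1)(4n+3) A_n` and `h_{n+1} = h_n + 2/(4n+1) + 2/(4n+3)`; for the
convolution this comes from a telescoping sum.
-/

/-- The `n`-th harmonic number `H_n = ∑_{i=1}^n 1/i`. -/
noncomputable def harm (n : ℕ) : ℝ := ∑ i ∈ Finset.range n, 1 / (i + 1 : ℝ)

open Finset

noncomputable def binomProd (k : ℕ) : ℝ :=
  (Nat.choose (2 * k) k : ℝ) * (Nat.choose (4 * k) (2 * k) : ℝ)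

noncomputable def harmWeight (k : ℕ) : ℝ := 2 * harm (4 * k) - harm (2 * k)

lemma binomProd_eq_centralBinom_mul (k : ℕ) :
    binomProd k = (k.centralBinom : ℝ) * ((2 * k).centralBinom : ℝ) := by
  simp [binomProd, Nat.centralBinom, show 4 * k = 2 * (2 * k) by ring]

lemma binomProd_succ (k : ℕ) :
    ((k : ℝ) + 1) ^ 2 * binomProd (k + 1) = 4 * (4 * k + 1) * (4 * k + 3) * binomProd k := by
  have step (n : ℕ) :
      ((n : ℝ) + 1) * (n + 1).centralBinom = 2 * (2 * n + 1) * n.centralBinom := by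
    exact_mod_cast Nat.succ_mul_centralBinom_succ n
  have e1 := step k
  have e2 := step (2 * k + 1)
  have e3 := step (2 * k)
  rw [binomProd_eq_centralBinom_mul, binomProd_eq_centralBinom_mul,
    show 2 * (k + 1) = 2 * k + 1 + 1 by ring]
  push_cast at e2 e3
  linear_combination ((k + 1 : ℝ) * (2 * k + 1 + 1).centralBinom) * e1
    + ((2 * k + 1 : ℝ) * k.centralBinom) * e2 + (2 * (4 * k + 3) * (k.centralBinom : ℝ)) * e3

lemma binomProd_nonneg (k : ℕ) : 0 ≤ binomProd k := by
  unfold binomProd; positivity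

lemma binomProd_le_pow (k : ℕ) : binomProd k ≤ 64 ^ k := by
  calc binomProd k ≤ 2 ^ (2 * k) * 2 ^ (4 * k) := by
        unfold binomProd
        gcongr <;> exact_mod_cast Nat.choose_le_two_pow _ _
    _ = 64 ^ k := by rw [← pow_add, show 2 * k + 4 * k = 6 * k by ring, pow_mul]; norm_num

lemma harm_succ (n : ℕ) : harm (n + 1) = harm n + 1 / (n + 1) := by
  simp [harm, sum_range_succ]

lemma harmWeight_succ (k : ℕ) :
    harmWeight (k + 1) = harmWeight k + 2 / (4 * k + 1) + 2 / (4 * k + 3) := by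
  simp only [harmWeight, show 4 * (k + 1) = 4 * k + 1 + 1 + 1 + 1 by ring,
    show 2 * (k + 1) = 2 * k + 1 + 1 by ring, harm_succ]
  push_cast
  field_simp
  ring

/-- The `k = n` summand is `A_n * 64^0 / 0 = 0` (as `(0 : ℝ)⁻¹ = 0`), matching the missing
`m = 0` term of `∑_{m ≥ 1} z^m / m`. -/
noncomputable def logConv (n : ℕ) : ℝ :=
  ∑ k ∈ range (n + 1), binomProd k * (64 ^ (n - k) / ((n - k : ℕ) : ℝ))

lemma logConv_succ (n : ℕ) :
    ((n : ℝ) + 1) ^ 2 * logConv (n + 1)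
      = 4 * (4 * n + 1) * (4 * n + 3) * logConv n + 64 * (2 * n + 1) * binomProd n := by
  set c : ℝ := 4 * (4 * n + 1) * (4 * n + 3)
  -- the summands of `(n+1)^2 logConv (n+1) - c logConv n` with `k < n` are `w (k+1) - w k`
  set w : ℕ → ℝ := fun k =>
    -64 * k ^ 2 * binomProd k * 64 ^ (n - k) / ((n + 1 - k : ℕ) : ℝ)
  have hstep : ∀ k < n,
      ((n : ℝ) + 1) ^ 2 * (binomProd k * (64 ^ (n + 1 - k) / ((n + 1 - k : ℕ) : ℝ)))
        - c * (binomProd k * (64 ^ (n - k) / ((n - k : ℕ) : ℝ))) = w (k + 1) - w k := by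
    intro k hk
    obtain ⟨m, rfl⟩ : ∃ m, n = k + m + 1 := ⟨n - k - 1, by omega⟩
    simp only [w, c, show k + m + 1 + 1 - k = m + 2 by omega, show k + m + 1 - k = m + 1 by omega,
      show k + m + 1 - (k + 1) = m by omega, show k + m + 1 + 1 - (k + 1) = m + 1 by omega]
    have hB : binomProd (k + 1)
        = 4 * (4 * k + 1) * (4 * k + 3) * binomProd k / ((k : ℝ) + 1) ^ 2 := by
      rw [← binomProd_succ]; field_simp
    rw [hB]
    push_cast
    field_simp
    ring
  have htel : ∑ k ∈ range n,
      (((n : ℝ) + 1) ^ 2 * (binomProd k * (64 ^ (n + 1 - k) / ((n + 1 - k : ℕ) : ℝ)))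
        - c * (binomProd k * (64 ^ (n - k) / ((n - k : ℕ) : ℝ)))) = w n - w 0 := by
    rw [← sum_range_sub]
    exact sum_congr rfl fun k hk => hstep k (mem_range.mp hk)
  rw [sum_sub_distrib, ← mul_sum, ← mul_sum] at htel
  simp only [logConv, sum_range_succ (n := n + 1), sum_range_succ (n := n), Nat.sub_self,
    show n + 1 - n = 1 by omega]
  simp only [w, Nat.sub_self, show n + 1 - n = 1 by omega] at htel
  push_cast at htel ⊢
  linear_combination htel

lemma logConv_eq (n : ℕ) : logConv n = 2 * binomProd n * harmWeight n := by
  induction n with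
  | zero => simp [logConv, harmWeight, harm]
  | succ n ih =>
    apply mul_left_cancel₀ (pow_ne_zero 2 (by positivity : (n : ℝ) + 1 ≠ 0))
    rw [logConv_succ, ih, harmWeight_succ,
      show ∀ a b : ℝ, ((n : ℝ) + 1) ^ 2 * (2 * a * b) = 2 * (((n : ℝ) + 1) ^ 2 * a) * b by
        intros; ring, binomProd_succ]
    field_simp
    ring

lemma summable_norm_pow_div_natCast {z : ℂ} (hz : ‖z‖ < 1) :
    Summable fun m : ℕ => ‖z ^ m / m‖ := by
  refine (summable_geometric_of_lt_one (norm_nonneg z) hz).of_nonneg_of_le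
    (fun _ => norm_nonneg _) fun m => ?_
  rw [norm_div, norm_pow, Complex.norm_natCast]
  rcases m.eq_zero_or_pos with rfl | hm
  · simp
  · exact div_le_self (by positivity) (by exact_mod_cast hm)

lemma summable_norm_binomProd_div_pow {x : ℂ} (hx : 64 < ‖x‖) :
    Summable fun k : ℕ => ‖(binomProd k : ℂ) / x ^ k‖ := by
  have hx0 : 0 < ‖x‖ := by linarith
  refine (summable_geometric_of_lt_one (by positivity) ((div_lt_one hx0).mpr hx)).of_nonneg_of_le
    (fun _ => norm_nonneg _) fun k => ?_
  rw [norm_div, norm_pow, Complex.norm_real, Real.norm_of_nonneg (binomProd_nonneg k), div_pow]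
  gcongr
  exact binomProd_le_pow k

lemma sum_range_binomProd_div_pow_mul (x : ℂ) (n : ℕ) :
    ∑ k ∈ range (n + 1),
        (binomProd k : ℂ) / x ^ k * ((64 / x) ^ (n - k) / ((n - k : ℕ) : ℂ))
      = 2 * ((binomProd n : ℂ) / x ^ n * (harmWeight n : ℂ)) := by
  have hterm : ∀ k ∈ range (n + 1),
      (binomProd k : ℂ) / x ^ k * ((64 / x) ^ (n - k) / ((n - k : ℕ) : ℂ)) =
        ((binomProd k * (64 ^ (n - k) / ((n - k : ℕ) : ℝ)) : ℝ) : ℂ) / x ^ n := by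
    intro k hk
    have hxk : (x ^ k)⁻¹ * (x ^ (n - k))⁻¹ = (x ^ n)⁻¹ := by
      rw [← mul_inv, ← pow_add, Nat.add_sub_cancel' (Nat.lt_succ_iff.mp (mem_range.mp hk))]
    push_cast
    simp only [div_eq_mul_inv, ← hxk]
    ring
  rw [sum_congr rfl hterm, ← sum_div, ← Complex.ofReal_sum]
  change ((logConv n : ℝ) : ℂ) / x ^ n = _
  rw [logConv_eq]
  push_cast
  ring

lemma log_div_sub_eq_neg_log_one_sub {x c : ℂ} (h : ‖c‖ < ‖x‖) :
    Complex.log (x / (x - c)) = -Complex.log (1 - c / x) := by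
  have hx : x ≠ 0 := norm_pos_iff.mp ((norm_nonneg c).trans_lt h)
  have hmem : 1 - c / x ∈ Complex.slitPlane := by
    simpa [sub_eq_add_neg] using Complex.mem_slitPlane_of_norm_lt_one (z := -(c / x))
      (by rwa [norm_neg, norm_div, div_lt_one (norm_pos_iff.mpr hx)])
  rw [← Complex.log_inv _ (Complex.slitPlane_arg_ne_pi hmem), one_sub_div hx, inv_div]

theorem stmt_10 (x : ℂ) (hx : ‖x‖ > 64) :
    Summable (fun k : ℕ => (((Nat.choose (2 * k) k : ℝ) * (Nat.choose (4 * k) (2 * k) : ℝ) : ℝ) : ℂ) / x ^ k * ((2 * harm (4 * k) - harm (2 * k) : ℝ) : ℂ)) ∧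
    Summable (fun k : ℕ => (((Nat.choose (2 * k) k : ℝ) * (Nat.choose (4 * k) (2 * k) : ℝ) : ℝ) : ℂ) / x ^ k) ∧
    ∑' k : ℕ, (((Nat.choose (2 * k) k : ℝ) * (Nat.choose (4 * k) (2 * k) : ℝ) : ℝ) : ℂ) / x ^ k * ((2 * harm (4 * k) - harm (2 * k) : ℝ) : ℂ) =
      (1 / 2 : ℂ) * Complex.log (x / (x - 64)) * ∑' k : ℕ, (((Nat.choose (2 * k) k : ℝ) * (Nat.choose (4 * k) (2 * k) : ℝ) : ℝ) : ℂ) / x ^ k := by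
  change Summable (fun k => (binomProd k : ℂ) / x ^ k * (harmWeight k : ℂ)) ∧
    Summable (fun k => (binomProd k : ℂ) / x ^ k) ∧
    ∑' k, (binomProd k : ℂ) / x ^ k * (harmWeight k : ℂ)
      = 1 / 2 * Complex.log (x / (x - 64)) * ∑' k, (binomProd k : ℂ) / x ^ k
  have h64 : ‖(64 : ℂ)‖ < ‖x‖ := by simpa using hx
  have hz : ‖64 / x‖ < 1 := by rwa [norm_div, div_lt_one ((norm_nonneg _).trans_lt h64)]
  have hF := summable_norm_binomProd_div_pow hx
  have hprod := hasSum_sum_range_mul_of_summable_norm hF (summable_norm_pow_div_natCast hz)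
  simp only [sum_range_binomProd_div_pow_mul, (Complex.hasSum_taylorSeries_neg_log hz).tsum_eq,
    ← log_div_sub_eq_neg_log_one_sub h64] at hprod
  have hsum := hprod.div_const 2
  simp only [mul_div_cancel_left₀ _ (two_ne_zero' ℂ)] at hsum
  exact ⟨hsum.summable, hF.of_norm, hsum.tsum_eq.trans (by ring)⟩
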